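/- Let G₁ and G₂ be simple connected graphs with n₂ = |V(G₂)| vertices in G₂ and m₁ = |E(G₁)|, m₂ = |E(G₂)| edges. Then the F-index of the edge R-join satisfies F(G₁ ∨̱_R G₂) = 8F(G₁) + F(G₂) + 3m₁M₁(G₂) + 6m₁²m₂ + m₁(n₂ + 2)³ + n₂m₁³. -/

import Mathlib

/-- The subdivision graph `S(G)`: a new vertex is inserted into each edge of `G`
(each edge is replaced by a path of length 2). The inserted vertices form the
right summand `↥G.edgeSet`. -/
def Sgraph {V : Type*} (G : SimpleGraph V) : SimpleGraph (V ⊕ ↥G.edgeSet) where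
  Adj x y :=
    match x, y with
    | Sum.inl v, Sum.inr e => v ∈ (e : Sym2 V)
    | Sum.inr e, Sum.inl v => v ∈ (e : Sym2 V)
    | _, _ => False
  symm := by refine ⟨?_⟩; rintro (v | e) (w | f) h <;> exact h
  loopless := by refine ⟨?_⟩; rintro (v | e) h <;> exact h

/-- The graph `R(G)`: obtained from `G` by inserting a new vertex into each edge of `G`
and joining each new vertex to the end vertices of its corresponding edge. -/
def Rgraph {V : Type*} (G : SimpleGraph V) : SimpleGraph (V ⊕ ↥G.edgeSet) where
  Adj x y :=
    match x, y with
    | Sum.inl v, Sum.inl w => G.Adj v w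
    | Sum.inl v, Sum.inr e => v ∈ (e : Sym2 V)
    | Sum.inr e, Sum.inl v => v ∈ (e : Sym2 V)
    | Sum.inr _, Sum.inr _ => False
  symm := by
    refine ⟨?_⟩
    rintro (v | e) (w | f) h
    · exact G.adj_symm h
    · exact h
    · exact h
    · exact h
  loopless := by
    refine ⟨?_⟩
    rintro (v | e) h
    · exact G.irrefl h
    · exact h

/-- The graph `Q(G)`: obtained from `G` by inserting a new vertex into each edge of `G`,
then joining by edges those pairs of new vertices lying on adjacent edges of `G`. -/
def Qgraph {V : Type*} (G : SimpleGraph V) : SimpleGraph (V ⊕ ↥G.edgeSet) where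
  Adj x y :=
    match x, y with
    | Sum.inl _, Sum.inl _ => False
    | Sum.inl v, Sum.inr e => v ∈ (e : Sym2 V)
    | Sum.inr e, Sum.inl v => v ∈ (e : Sym2 V)
    | Sum.inr e, Sum.inr f => e ≠ f ∧ ∃ v, v ∈ (e : Sym2 V) ∧ v ∈ (f : Sym2 V)
  symm := by
    refine ⟨?_⟩
    rintro (v | e) (w | f) h
    · exact h
    · exact h
    · exact h
    · exact ⟨h.1.symm, by obtain ⟨v, h1, h2⟩ := h.2; exact ⟨v, h2, h1⟩⟩
  loopless := by
    refine ⟨?_⟩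
    rintro (v | e) h
    · exact h
    · exact h.1 rfl

/-- The total graph `T(G)`: obtained from `G` by inserting a new vertex into each edge,
joining each new vertex to the end vertices of its corresponding edge, and joining by
edges those pairs of new vertices lying on adjacent edges of `G`. -/
def Tgraph {V : Type*} (G : SimpleGraph V) : SimpleGraph (V ⊕ ↥G.edgeSet) where
  Adj x y :=
    match x, y with
    | Sum.inl v, Sum.inl w => G.Adj v w
    | Sum.inl v, Sum.inr e => v ∈ (e : Sym2 V)
    | Sum.inr e, Sum.inl v => v ∈ (e : Sym2 V)
    | Sum.inr e, Sum.inr f => e ≠ f ∧ ∃ v, v ∈ (e : Sym2 V) ∧ v ∈ (f : Sym2 V)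
  symm := by
    refine ⟨?_⟩
    rintro (v | e) (w | f) h
    · exact G.adj_symm h
    · exact h
    · exact h
    · exact ⟨h.1.symm, by obtain ⟨v, h1, h2⟩ := h.2; exact ⟨v, h2, h1⟩⟩
  loopless := by
    refine ⟨?_⟩
    rintro (v | e) h
    · exact G.irrefl h
    · exact h.1 rfl

/-- The disjoint union of `H` and `K` together with all edges joining a vertex `a` of `H`
with `P a` to every vertex of `K`. -/
def joinOn {A B : Type*} (H : SimpleGraph A) (K : SimpleGraph B) (P : A → Prop) :
    SimpleGraph (A ⊕ B) where
  Adj x y :=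
    match x, y with
    | Sum.inl a, Sum.inl a' => H.Adj a a'
    | Sum.inr b, Sum.inr b' => K.Adj b b'
    | Sum.inl a, Sum.inr _ => P a
    | Sum.inr _, Sum.inl a => P a
  symm := by
    refine ⟨?_⟩
    rintro (a | b) (a' | b') h
    · exact H.adj_symm h
    · exact h
    · exact h
    · exact K.adj_symm h
  loopless := by
    refine ⟨?_⟩
    rintro (a | b) h
    · exact H.irrefl h
    · exact K.irrefl h

/-- The vertex S-join `G₁ ∨̇_S G₂`: obtained from `S(G₁)` and `G₂` by joining each vertex
of `V(G₁)` to every vertex of `G₂`. -/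
def vertexSJoin {V₁ V₂ : Type*} (G₁ : SimpleGraph V₁) (G₂ : SimpleGraph V₂) :
    SimpleGraph ((V₁ ⊕ ↥G₁.edgeSet) ⊕ V₂) :=
  joinOn (Sgraph G₁) G₂ (fun x => x.isLeft)

/-- The edge S-join `G₁ ∨̱_S G₂`: obtained from `S(G₁)` and `G₂` by joining each inserted
vertex (each vertex of `I(G₁)`) to every vertex of `G₂`. -/
def edgeSJoin {V₁ V₂ : Type*} (G₁ : SimpleGraph V₁) (G₂ : SimpleGraph V₂) :
    SimpleGraph ((V₁ ⊕ ↥G₁.edgeSet) ⊕ V₂) :=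
  joinOn (Sgraph G₁) G₂ (fun x => x.isRight)

/-- The vertex R-join `G₁ ∨̇_R G₂`. -/
def vertexRJoin {V₁ V₂ : Type*} (G₁ : SimpleGraph V₁) (G₂ : SimpleGraph V₂) :
    SimpleGraph ((V₁ ⊕ ↥G₁.edgeSet) ⊕ V₂) :=
  joinOn (Rgraph G₁) G₂ (fun x => x.isLeft)

/-- The edge R-join `G₁ ∨̱_R G₂`. -/
def edgeRJoin {V₁ V₂ : Type*} (G₁ : SimpleGraph V₁) (G₂ : SimpleGraph V₂) :
    SimpleGraph ((V₁ ⊕ ↥G₁.edgeSet) ⊕ V₂) :=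
  joinOn (Rgraph G₁) G₂ (fun x => x.isRight)

/-- The vertex Q-join `G₁ ∨̇_Q G₂`. -/
def vertexQJoin {V₁ V₂ : Type*} (G₁ : SimpleGraph V₁) (G₂ : SimpleGraph V₂) :
    SimpleGraph ((V₁ ⊕ ↥G₁.edgeSet) ⊕ V₂) :=
  joinOn (Qgraph G₁) G₂ (fun x => x.isLeft)

/-- The edge Q-join `G₁ ∨̱_Q G₂`. -/
def edgeQJoin {V₁ V₂ : Type*} (G₁ : SimpleGraph V₁) (G₂ : SimpleGraph V₂) :
    SimpleGraph ((V₁ ⊕ ↥G₁.edgeSet) ⊕ V₂) :=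
  joinOn (Qgraph G₁) G₂ (fun x => x.isRight)

/-- The vertex T-join `G₁ ∨̇_T G₂`. -/
def vertexTJoin {V₁ V₂ : Type*} (G₁ : SimpleGraph V₁) (G₂ : SimpleGraph V₂) :
    SimpleGraph ((V₁ ⊕ ↥G₁.edgeSet) ⊕ V₂) :=
  joinOn (Tgraph G₁) G₂ (fun x => x.isLeft)

/-- The edge T-join `G₁ ∨̱_T G₂`. -/
def edgeTJoin {V₁ V₂ : Type*} (G₁ : SimpleGraph V₁) (G₂ : SimpleGraph V₂) :
    SimpleGraph ((V₁ ⊕ ↥G₁.edgeSet) ⊕ V₂) :=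
  joinOn (Tgraph G₁) G₂ (fun x => x.isRight)

/-- Degree of a vertex in a graph on a finite vertex type. -/
noncomputable def gdeg {V : Type*} [Finite V] (G : SimpleGraph V) (v : V) : ℕ :=
  haveI : Fintype ↥(G.neighborSet v) := Fintype.ofFinite _
  G.degree v

/-- The forgotten topological index (F-index): `F(G) = ∑_{v ∈ V(G)} d_G(v)³`. -/
noncomputable def Findex {V : Type*} [Finite V] (G : SimpleGraph V) : ℕ :=
  haveI := Fintype.ofFinite V
  ∑ v : V, gdeg G v ^ 3

/-- The first Zagreb index: `M₁(G) = ∑_{v ∈ V(G)} d_G(v)²`. -/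
noncomputable def M1 {V : Type*} [Finite V] (G : SimpleGraph V) : ℕ :=
  haveI := Fintype.ofFinite V
  ∑ v : V, gdeg G v ^ 2

/-- `M₄(G) = ∑_{v ∈ V(G)} d_G(v)⁴`. -/
noncomputable def M4 {V : Type*} [Finite V] (G : SimpleGraph V) : ℕ :=
  haveI := Fintype.ofFinite V
  ∑ v : V, gdeg G v ^ 4

/-- The hyper Zagreb index: `HM(G) = ∑_{uv ∈ E(G)} (d_G(u) + d_G(v))²`. -/
noncomputable def HM {V : Type*} [Finite V] (G : SimpleGraph V) : ℕ :=
  haveI : Fintype ↥G.edgeSet := Fintype.ofFinite _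
  ∑ e : ↥G.edgeSet,
    Sym2.lift ⟨fun u v => (gdeg G u + gdeg G v) ^ 2,
      fun u v => by dsimp only; rw [add_comm]⟩ (e : Sym2 V)

/-- The redefined Zagreb index:
`ReZM(G) = ∑_{uv ∈ E(G)} d_G(u) d_G(v) (d_G(u) + d_G(v))`. -/
noncomputable def ReZM {V : Type*} [Finite V] (G : SimpleGraph V) : ℕ :=
  haveI : Fintype ↥G.edgeSet := Fintype.ofFinite _
  ∑ e : ↥G.edgeSet,
    Sym2.lift ⟨fun u v => gdeg G u * gdeg G v * (gdeg G u + gdeg G v),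
      fun u v => by dsimp only; ring⟩ (e : Sym2 V)

/-- The number of edges of `G`. -/
noncomputable def numEdges {V : Type*} (G : SimpleGraph V) : ℕ :=
  Nat.card ↥G.edgeSet
/-! In `G₁ ∨̱_R G₂` a vertex `v` of `G₁` has degree `2 d(v)`, an inserted vertex has degree
`n₂ + 2`, and a vertex `u` of `G₂` has degree `m₁ + d(u)`. Summing cubes, the first two classes
give `8 F(G₁) + m₁ (n₂ + 2)³`, and expanding `(m₁ + d(u))³` over `G₂` with the handshake lemma
`∑ d(u) = 2 m₂` gives the remaining terms. -/

lemma Nat.card_subtype_sum {A B : Type*} [Finite A] [Finite B] (p : A ⊕ B → Prop) :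
    Nat.card {x // p x} = Nat.card {a // p (.inl a)} + Nat.card {b // p (.inr b)} := by
  rw [Nat.card_congr Equiv.subtypeSum, Nat.card_sum]

section Degree

variable {V : Type*} (G : SimpleGraph V)

lemma card_mem_edge (e : G.edgeSet) : Nat.card {v // v ∈ (e : Sym2 V)} = 2 := by
  obtain ⟨e, he⟩ := e
  induction e using Sym2.ind with
  | _ u w =>
    rw [SimpleGraph.mem_edgeSet] at he
    rw [← Nat.card_coe_set_eq ({u, w} : Set V) |>.trans (Set.ncard_pair he.ne)]
    exact Nat.card_congr (Equiv.subtypeEquivRight fun v => by simp)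

variable [Finite V]

lemma gdeg_eq_card_adj (v : V) : gdeg G v = Nat.card {w // G.Adj v w} := by
  let : Fintype (G.neighborSet v) := Fintype.ofFinite _
  rw [gdeg, ← SimpleGraph.card_neighborSet_eq_degree, ← Nat.card_eq_fintype_card]
  rfl

lemma card_incident_edges_eq_gdeg (v : V) :
    Nat.card {e : G.edgeSet // v ∈ (e : Sym2 V)} = gdeg G v := by
  classical
  rw [gdeg_eq_card_adj]
  exact Nat.card_congr <|
    (Equiv.subtypeSubtypeEquivSubtypeInter _ _).trans (G.incidenceSetEquivNeighborSet v)

lemma sum_gdeg_eq_two_mul_numEdges [Fintype V] : ∑ v, gdeg G v = 2 * numEdges G := by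
  classical
  have gdeg_eq_degree : ∀ v, gdeg G v = G.degree v := fun v => by
    rw [gdeg_eq_card_adj, ← SimpleGraph.card_neighborSet_eq_degree, ← Nat.card_eq_fintype_card]
    rfl
  simp_rw [gdeg_eq_degree]
  rw [SimpleGraph.sum_degrees_eq_twice_card_edges, SimpleGraph.edgeFinset_card, numEdges,
    Nat.card_eq_fintype_card]

lemma Findex_eq_sum [Fintype V] : Findex G = ∑ v, gdeg G v ^ 3 := by
  rw [Findex, Subsingleton.elim (Fintype.ofFinite V)]

lemma M1_eq_sum [Fintype V] : M1 G = ∑ v, gdeg G v ^ 2 := by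
  rw [M1, Subsingleton.elim (Fintype.ofFinite V)]

end Degree

section Join

variable {A B : Type*} [Finite A] [Finite B] (H : SimpleGraph A) (K : SimpleGraph B)
  (P : A → Prop)

lemma gdeg_joinOn_inl [DecidablePred P] (a : A) :
    gdeg (joinOn H K P) (.inl a) = gdeg H a + if P a then Nat.card B else 0 := by
  rw [gdeg_eq_card_adj, gdeg_eq_card_adj H, Nat.card_subtype_sum]
  congr 1
  split_ifs with h <;> simp [joinOn, h]

lemma gdeg_joinOn_inr (b : B) :
    gdeg (joinOn H K P) (.inr b) = Nat.card {a // P a} + gdeg K b := by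
  rw [gdeg_eq_card_adj, gdeg_eq_card_adj K, Nat.card_subtype_sum]
  rfl

end Join

section Rgraph

variable {V : Type*} [Finite V] (G : SimpleGraph V)

lemma gdeg_Rgraph_inl (v : V) : gdeg (Rgraph G) (.inl v) = 2 * gdeg G v := by
  rw [gdeg_eq_card_adj, Nat.card_subtype_sum, two_mul]
  exact congrArg₂ (· + ·) (gdeg_eq_card_adj G v).symm (card_incident_edges_eq_gdeg G v)

lemma gdeg_Rgraph_inr (e : G.edgeSet) : gdeg (Rgraph G) (.inr e) = 2 := by
  rw [gdeg_eq_card_adj, Nat.card_subtype_sum]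
  simp [Rgraph, card_mem_edge]

end Rgraph

lemma sum_add_gdeg_pow_three {V : Type*} [Fintype V] (G : SimpleGraph V) (c : ℕ) :
    ∑ v, (c + gdeg G v) ^ 3 =
      Findex G + 3 * c * M1 G + 6 * c ^ 2 * numEdges G + Nat.card V * c ^ 3 := by
  have expand : ∀ v, (c + gdeg G v) ^ 3 =
      gdeg G v ^ 3 + 3 * c * gdeg G v ^ 2 + 3 * c ^ 2 * gdeg G v + c ^ 3 := fun v => by ring
  simp only [expand, Finset.sum_add_distrib, ← Finset.mul_sum, Finset.sum_const,
    Finset.card_univ, smul_eq_mul, sum_gdeg_eq_two_mul_numEdges, Findex_eq_sum, M1_eq_sum,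
    Nat.card_eq_fintype_card]
  ring

section EdgeRJoin

variable {V₁ V₂ : Type*} [Finite V₁] [Finite V₂] (G₁ : SimpleGraph V₁) (G₂ : SimpleGraph V₂)

lemma gdeg_edgeRJoin_vertex (v : V₁) :
    gdeg (edgeRJoin G₁ G₂) (.inl (.inl v)) = 2 * gdeg G₁ v := by
  rw [edgeRJoin, gdeg_joinOn_inl, gdeg_Rgraph_inl]
  simp

lemma gdeg_edgeRJoin_inserted (e : G₁.edgeSet) :
    gdeg (edgeRJoin G₁ G₂) (.inl (.inr e)) = Nat.card V₂ + 2 := by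
  rw [edgeRJoin, gdeg_joinOn_inl, gdeg_Rgraph_inr]
  simp [add_comm]

lemma gdeg_edgeRJoin_right (b : V₂) :
    gdeg (edgeRJoin G₁ G₂) (.inr b) = numEdges G₁ + gdeg G₂ b := by
  rw [edgeRJoin, gdeg_joinOn_inr, Nat.card_subtype_sum]
  simp [numEdges]

end EdgeRJoin

theorem Findex_edgeRJoin_general {V₁ V₂ : Type*} [Finite V₁] [Finite V₂]
    (G₁ : SimpleGraph V₁) (G₂ : SimpleGraph V₂)
    (n₂ m₁ m₂ : ℕ)
    (hn₂ : n₂ = Nat.card V₂)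
    (hm₁ : m₁ = numEdges G₁) (hm₂ : m₂ = numEdges G₂) :
    (Findex (edgeRJoin G₁ G₂) : ℤ) =
      8 * (Findex G₁ : ℤ) + (Findex G₂ : ℤ) + 3 * (m₁ : ℤ) * (M1 G₂ : ℤ)
        + 6 * (m₁ : ℤ) ^ 2 * (m₂ : ℤ) + (m₁ : ℤ) * ((n₂ : ℤ) + 2) ^ 3 + (n₂ : ℤ) * (m₁ : ℤ) ^ 3 := by
  have := Fintype.ofFinite V₁
  have := Fintype.ofFinite V₂
  have := Fintype.ofFinite G₁.edgeSet
  have vertex_side : ∑ v : V₁, (2 * gdeg G₁ v) ^ 3 = 8 * Findex G₁ := by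
    simp only [Findex_eq_sum, Finset.mul_sum, mul_pow]
    norm_num
  have inserted_side : ∑ _e : G₁.edgeSet, (n₂ + 2) ^ 3 = m₁ * (n₂ + 2) ^ 3 := by
    rw [Finset.sum_const, Finset.card_univ, ← Nat.card_eq_fintype_card, smul_eq_mul, hm₁, numEdges]
  have key : Findex (edgeRJoin G₁ G₂) = 8 * Findex G₁ + m₁ * (n₂ + 2) ^ 3 +
      (Findex G₂ + 3 * m₁ * M1 G₂ + 6 * m₁ ^ 2 * m₂ + n₂ * m₁ ^ 3) := by
    rw [Findex_eq_sum, Fintype.sum_sum_type, Fintype.sum_sum_type]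
    simp only [gdeg_edgeRJoin_vertex, gdeg_edgeRJoin_inserted, gdeg_edgeRJoin_right,
      sum_add_gdeg_pow_three, vertex_side, ← hn₂, ← hm₁, ← hm₂, inserted_side]
  rw [key]
  push_cast
  ring

theorem Findex_edgeRJoin {V₁ V₂ : Type*} [Finite V₁] [Finite V₂]
    (G₁ : SimpleGraph V₁) (G₂ : SimpleGraph V₂)
    (hc₁ : G₁.Connected) (hc₂ : G₂.Connected)
    (n₂ m₁ m₂ : ℕ)
    (hn₂ : n₂ = Nat.card V₂)
    (hm₁ : m₁ = numEdges G₁) (hm₂ : m₂ = numEdges G₂) :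
    (Findex (edgeRJoin G₁ G₂) : ℤ) =
      8 * (Findex G₁ : ℤ) + (Findex G₂ : ℤ) + 3 * (m₁ : ℤ) * (M1 G₂ : ℤ)
        + 6 * (m₁ : ℤ) ^ 2 * (m₂ : ℤ) + (m₁ : ℤ) * ((n₂ : ℤ) + 2) ^ 3 + (n₂ : ℤ) * (m₁ : ℤ) ^ 3 :=
  Findex_edgeRJoin_general G₁ G₂ n₂ m₁ m₂ hn₂ hm₁ hm₂
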